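/- Bypassing a reversible Left option preserves equality: if G = {A, B, C, …| G^S | D, E, F, …} and A has a Right option A^R with A^R ≤ G, and the Left options of A^R are {W, X, Y, …}, then G' = {W, X, Y, …, B, C, …| G^S | D, E, F, …} satisfies G = G'. -/

import Mathlib

inductive SGame : Type where
  | mk (left right : List SGame) (score : ℝ)

namespace SGame

def leftOpts : SGame → List SGame | mk L _ _ => L
def rightOpts : SGame → List SGame | mk _ R _ => R
def score : SGame → ℝ | mk _ _ s => s

mutual
  /-- Optimal final score when Left moves first. -/
  def leftScore : SGame → ℝ
    | mk [] _ s => s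
    | mk (g :: L) _ _ => maxRight g L
  termination_by G => sizeOf G
  decreasing_by all_goals (simp; try omega)
  def maxRight : SGame → List SGame → ℝ
    | g, [] => rightScore g
    | g, h :: t => max (rightScore g) (maxRight h t)
  termination_by g l => 1 + sizeOf g + sizeOf l
  decreasing_by all_goals (simp; try omega)
  /-- Optimal final score when Right moves first. -/
  def rightScore : SGame → ℝ
    | mk _ [] s => s
    | mk _ (g :: R) _ => minLeft g R
  termination_by G => sizeOf G
  decreasing_by all_goals (simp; try omega)
  def minLeft : SGame → List SGame → ℝ
    | g, [] => leftScore g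
    | g, h :: t => min (leftScore g) (minLeft h t)
  termination_by g l => 1 + sizeOf g + sizeOf l
  decreasing_by all_goals (simp; try omega)
end

/-- Long-rule disjunctive sum. -/
def sum : SGame → SGame → SGame
  | mk L1 R1 s1, mk L2 R2 s2 =>
    mk ((L1.attach.map fun g => sum g.1 (mk L2 R2 s2)) ++
        (L2.attach.map fun h => sum (mk L1 R1 s1) h.1))
       ((R1.attach.map fun g => sum g.1 (mk L2 R2 s2)) ++
        (R2.attach.map fun h => sum (mk L1 R1 s1) h.1))
       (s1 + s2)
termination_by G H => sizeOf G + sizeOf H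
decreasing_by
  all_goals simp
  · have := List.sizeOf_lt_of_mem g.2; omega
  · have := List.sizeOf_lt_of_mem h.2; omega
  · have := List.sizeOf_lt_of_mem g.2; omega
  · have := List.sizeOf_lt_of_mem h.2; omega

end SGame

namespace SGame

/-- The game `{.|0|.}`. -/
def zero : SGame := mk [] [] 0

/-- Negation: `-G = {-G^R | -G^S | -G^L}`. -/
def neg : SGame → SGame
  | mk L R s =>
    mk (R.attach.map fun g => neg g.1) (L.attach.map fun g => neg g.1) (-s)
termination_by G => sizeOf G
decreasing_by
  all_goals (have := List.sizeOf_lt_of_mem g.2; simp; omega)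

/-- Identity of game trees (options regarded as sets). -/
def Ident : SGame → SGame → Prop
  | mk L1 R1 s1, mk L2 R2 s2 =>
    s1 = s2 ∧
    (∀ g ∈ L1.attach, ∃ h ∈ L2.attach, Ident g.1 h.1) ∧
    (∀ h ∈ L2.attach, ∃ g ∈ L1.attach, Ident g.1 h.1) ∧
    (∀ g ∈ R1.attach, ∃ h ∈ R2.attach, Ident g.1 h.1) ∧
    (∀ h ∈ R2.attach, ∃ g ∈ R1.attach, Ident g.1 h.1)
termination_by G H => sizeOf G + sizeOf H
decreasing_by
  all_goals
    (have := List.sizeOf_lt_of_mem g.2; have := List.sizeOf_lt_of_mem h.2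
     simp; omega)

inductive Outcome : Type where
  | L | R | N | P | T
deriving DecidableEq

/-- The outcome class of a game, determined by the signs of its final scores. -/
noncomputable def outcome (G : SGame) : Outcome :=
  if 0 < G.leftScore then
    (if 0 < G.rightScore then .L else if G.rightScore = 0 then .L else .N)
  else if G.leftScore = 0 then
    (if 0 < G.rightScore then .L else if G.rightScore = 0 then .T else .R)
  else
    (if 0 < G.rightScore then .P else .R)

/-- `G ≥ H`. -/
def Ge (G H : SGame) : Prop :=
  ∀ X : SGame,
    (0 ≤ (H.sum X).leftScore → 0 ≤ (G.sum X).leftScore) ∧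
    (0 ≤ (H.sum X).rightScore → 0 ≤ (G.sum X).rightScore) ∧
    (0 < (H.sum X).leftScore → 0 < (G.sum X).leftScore) ∧
    (0 < (H.sum X).rightScore → 0 < (G.sum X).rightScore)

/-- `G ≤ H`. -/
def Le (G H : SGame) : Prop :=
  ∀ X : SGame,
    ((H.sum X).leftScore ≤ 0 → (G.sum X).leftScore ≤ 0) ∧
    ((H.sum X).rightScore ≤ 0 → (G.sum X).rightScore ≤ 0) ∧
    ((H.sum X).leftScore < 0 → (G.sum X).leftScore < 0) ∧
    ((H.sum X).rightScore < 0 → (G.sum X).rightScore < 0)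

/-- Game equality: same outcome in every disjunctive-sum context. -/
def gameEq (G H : SGame) : Prop :=
  ∀ X : SGame, (G.sum X).outcome = (H.sum X).outcome

end SGame

namespace SGame

/-- Every score in the game tree of `G` satisfies `p`. -/
def AllScores (p : ℝ → Prop) : SGame → Prop
  | mk L R s =>
    p s ∧ (∀ g ∈ L.attach, AllScores p g.1) ∧ (∀ g ∈ R.attach, AllScores p g.1)
termination_by G => sizeOf G
decreasing_by all_goals (have := List.sizeOf_lt_of_mem g.2; simp; omega)

/-- `G ≡ H`: identical underlying game trees, with equal scores at all
termination vertices (vertices at which at least one player has no option,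
i.e. where the play of some disjunctive sum can end). -/
def Equiv : SGame → SGame → Prop
  | mk L1 R1 s1, mk L2 R2 s2 =>
    ((L1 = [] ∨ R1 = []) → s1 = s2) ∧
    (∀ g ∈ L1.attach, ∃ h ∈ L2.attach, Equiv g.1 h.1) ∧
    (∀ h ∈ L2.attach, ∃ g ∈ L1.attach, Equiv g.1 h.1) ∧
    (∀ g ∈ R1.attach, ∃ h ∈ R2.attach, Equiv g.1 h.1) ∧
    (∀ h ∈ R2.attach, ∃ g ∈ R1.attach, Equiv g.1 h.1)
termination_by G H => sizeOf G + sizeOf H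
decreasing_by
  all_goals
    (have := List.sizeOf_lt_of_mem g.2; have := List.sizeOf_lt_of_mem h.2
     simp; omega)

/-- `G` is in canonical form: hereditarily, no dominated and no reversible options. -/
def Canonical : SGame → Prop
  | mk L R s =>
    (∀ A ∈ L, ∀ B ∈ L, A ≠ B → ¬ Ge A B) ∧
    (∀ D ∈ R, ∀ E ∈ R, D ≠ E → ¬ Le D E) ∧
    (∀ A ∈ L, ∀ Ar ∈ A.rightOpts, ¬ Le Ar (mk L R s)) ∧
    (∀ D ∈ R, ∀ Dl ∈ D.leftOpts, ¬ Ge Dl (mk L R s)) ∧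
    (∀ g ∈ L.attach, Canonical g.1) ∧ (∀ g ∈ R.attach, Canonical g.1)
termination_by G => sizeOf G
decreasing_by all_goals (have := List.sizeOf_lt_of_mem g.2; simp; omega)

/-- One reduction step: removing a dominated option or bypassing a reversible
option, at the root or in some subposition. -/
inductive Step : SGame → SGame → Prop where
  | domL {L1 L2 : List SGame} {R : List SGame} {s : ℝ} {B : SGame} (A : SGame)
      (hA : A ∈ L1 ++ L2) (h : Ge A B) :
      Step (mk (L1 ++ B :: L2) R s) (mk (L1 ++ L2) R s)
  | domR {R1 R2 : List SGame} {L : List SGame} {s : ℝ} {E : SGame} (D : SGame)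
      (hD : D ∈ R1 ++ R2) (h : Le D E) :
      Step (mk L (R1 ++ E :: R2) s) (mk L (R1 ++ R2) s)
  | revL {L1 L2 : List SGame} {R : List SGame} {s : ℝ} {A Ar : SGame}
      (hAr : Ar ∈ A.rightOpts) (h : Le Ar (mk (L1 ++ A :: L2) R s)) :
      Step (mk (L1 ++ A :: L2) R s) (mk (L1 ++ Ar.leftOpts ++ L2) R s)
  | revR {R1 R2 : List SGame} {L : List SGame} {s : ℝ} {D Dl : SGame}
      (hDl : Dl ∈ D.leftOpts) (h : Ge Dl (mk L (R1 ++ D :: R2) s)) :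
      Step (mk L (R1 ++ D :: R2) s) (mk L (R1 ++ Dl.rightOpts ++ R2) s)
  | congL {g g' : SGame} {L1 L2 R : List SGame} {s : ℝ} (h : Step g g') :
      Step (mk (L1 ++ g :: L2) R s) (mk (L1 ++ g' :: L2) R s)
  | congR {g g' : SGame} {L R1 R2 : List SGame} {s : ℝ} (h : Step g g') :
      Step (mk L (R1 ++ g :: R2) s) (mk L (R1 ++ g' :: R2) s)

end SGame

/-! For an upper set `S` of reals, membership of the optimal scores in `S` propagates through the
game tree: Left's score lies in `S` iff the Right score of some Left option does, Right's iff the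
Left scores of all Right options do. As outcomes only depend on membership in `Ici 0` and `Ioi 0`,
it suffices to show, by induction on `X`, that `G + X` and `G' + X` put their scores in the same
upper sets. The only real case is Left's move to `A + X` in `G + X`: Right answers with `Ar + X`,
and Left's good reply there is either `W + X` for a Left option `W` of `Ar`, also available in
`G' + X`, or `Ar + x`, which `Ar ≤ G` and induction carry over to `G' + x`. Conversely a move to
`W + X` in `G' + X` is no better for Left than `Ar + X`, hence than `G + X`.

If `Ar` had no Left options, `Ar ≤ G` would fail in a context where Left, forced to move in `G`,
is answered by a large penalty. -/

namespace SGame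

open Set

@[simp] lemma leftOpts_mk (L R : List SGame) (s : ℝ) : (mk L R s).leftOpts = L := rfl
@[simp] lemma rightOpts_mk (L R : List SGame) (s : ℝ) : (mk L R s).rightOpts = R := rfl
@[simp] lemma score_mk (L R : List SGame) (s : ℝ) : (mk L R s).score = s := rfl

lemma sizeOf_lt_of_mem_leftOpts {G g : SGame} (h : g ∈ G.leftOpts) : sizeOf g < sizeOf G := by
  obtain ⟨L, R, s⟩ := G
  have := List.sizeOf_lt_of_mem (show g ∈ L from h)
  simp only [mk.sizeOf_spec]
  omega

lemma sizeOf_lt_of_mem_rightOpts {G g : SGame} (h : g ∈ G.rightOpts) : sizeOf g < sizeOf G := by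
  obtain ⟨L, R, s⟩ := G
  have := List.sizeOf_lt_of_mem (show g ∈ R from h)
  simp only [mk.sizeOf_spec]
  omega

theorem induction_opts {motive : SGame → Prop}
    (ind : ∀ X, (∀ x ∈ X.leftOpts, motive x) → (∀ x ∈ X.rightOpts, motive x) → motive X)
    (X : SGame) : motive X :=
  ind X (fun x _ => induction_opts ind x) (fun x _ => induction_opts ind x)
termination_by sizeOf X
decreasing_by
  · exact sizeOf_lt_of_mem_leftOpts ‹_›
  · exact sizeOf_lt_of_mem_rightOpts ‹_›

lemma rightScore_le_maxRight (g : SGame) (t : List SGame) :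
    ∀ h ∈ g :: t, h.rightScore ≤ maxRight g t := by
  induction t generalizing g with
  | nil => simp [maxRight]
  | cons b t ih =>
    rw [maxRight, List.forall_mem_cons]
    exact ⟨le_max_left _ _, fun h hh => le_max_of_le_right (ih b h hh)⟩

lemma exists_maxRight_eq (g : SGame) (t : List SGame) :
    ∃ h ∈ g :: t, maxRight g t = h.rightScore := by
  induction t generalizing g with
  | nil => exact ⟨g, List.mem_singleton_self g, by rw [maxRight]⟩
  | cons b t ih =>
    obtain ⟨h, hh, he⟩ := ih b
    rw [maxRight]
    rcases max_choice (rightScore g) (maxRight b t) with hg | hb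
    · exact ⟨g, List.mem_cons_self, hg⟩
    · exact ⟨h, List.mem_cons_of_mem _ hh, hb.trans he⟩

lemma minLeft_le_leftScore (g : SGame) (t : List SGame) :
    ∀ h ∈ g :: t, minLeft g t ≤ h.leftScore := by
  induction t generalizing g with
  | nil => simp [minLeft]
  | cons b t ih =>
    rw [minLeft, List.forall_mem_cons]
    exact ⟨min_le_left _ _, fun h hh => min_le_of_right_le (ih b h hh)⟩

lemma exists_minLeft_eq (g : SGame) (t : List SGame) :
    ∃ h ∈ g :: t, minLeft g t = h.leftScore := by
  induction t generalizing g with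
  | nil => exact ⟨g, List.mem_singleton_self g, by rw [minLeft]⟩
  | cons b t ih =>
    obtain ⟨h, hh, he⟩ := ih b
    rw [minLeft]
    rcases min_choice (leftScore g) (minLeft b t) with hg | hb
    · exact ⟨g, List.mem_cons_self, hg⟩
    · exact ⟨h, List.mem_cons_of_mem _ hh, hb.trans he⟩

lemma leftScore_of_leftOpts_eq_nil {G : SGame} (h : G.leftOpts = []) :
    G.leftScore = G.score := by
  obtain ⟨L, R, s⟩ := G
  obtain rfl : L = [] := h
  rw [leftScore, score]

lemma rightScore_of_rightOpts_eq_nil {G : SGame} (h : G.rightOpts = []) :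
    G.rightScore = G.score := by
  obtain ⟨L, R, s⟩ := G
  obtain rfl : R = [] := h
  rw [rightScore, score]

lemma rightScore_le_leftScore {G g : SGame} (hg : g ∈ G.leftOpts) :
    g.rightScore ≤ G.leftScore := by
  obtain ⟨_ | ⟨a, t⟩, R, s⟩ := G
  · simp at hg
  · rw [leftScore]; exact rightScore_le_maxRight a t g hg

lemma exists_leftScore_eq {G : SGame} (h : G.leftOpts ≠ []) :
    ∃ g ∈ G.leftOpts, G.leftScore = g.rightScore := by
  obtain ⟨_ | ⟨a, t⟩, R, s⟩ := G
  · simp at h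
  · rw [leftScore]; exact exists_maxRight_eq a t

lemma rightScore_le_leftScore_of_mem_rightOpts {G d : SGame} (hd : d ∈ G.rightOpts) :
    G.rightScore ≤ d.leftScore := by
  obtain ⟨L, _ | ⟨a, t⟩, s⟩ := G
  · simp at hd
  · rw [rightScore]; exact minLeft_le_leftScore a t d hd

lemma exists_rightScore_eq {G : SGame} (h : G.rightOpts ≠ []) :
    ∃ d ∈ G.rightOpts, G.rightScore = d.leftScore := by
  obtain ⟨L, _ | ⟨a, t⟩, s⟩ := G
  · simp at h
  · rw [rightScore]; exact exists_minLeft_eq a t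

lemma sum_eq (G H : SGame) : G.sum H =
    mk (G.leftOpts.map (·.sum H) ++ H.leftOpts.map (G.sum ·))
       (G.rightOpts.map (·.sum H) ++ H.rightOpts.map (G.sum ·))
       (G.score + H.score) := by
  obtain ⟨L, R, s⟩ := G
  obtain ⟨L', R', s'⟩ := H
  rw [sum]
  simp [leftOpts, rightOpts, score]

lemma score_sum (G H : SGame) : (G.sum H).score = G.score + H.score := by
  rw [sum_eq]; rfl

lemma mem_leftOpts_sum {G H g : SGame} : g ∈ (G.sum H).leftOpts ↔
    (∃ B ∈ G.leftOpts, B.sum H = g) ∨ ∃ x ∈ H.leftOpts, G.sum x = g := by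
  rw [sum_eq]; simp

lemma mem_rightOpts_sum {G H g : SGame} : g ∈ (G.sum H).rightOpts ↔
    (∃ D ∈ G.rightOpts, D.sum H = g) ∨ ∃ x ∈ H.rightOpts, G.sum x = g := by
  rw [sum_eq]; simp

lemma leftOpts_sum_eq_nil {G H : SGame} :
    (G.sum H).leftOpts = [] ↔ G.leftOpts = [] ∧ H.leftOpts = [] := by
  rw [sum_eq]; simp

lemma rightOpts_sum_eq_nil {G H : SGame} :
    (G.sum H).rightOpts = [] ↔ G.rightOpts = [] ∧ H.rightOpts = [] := by
  rw [sum_eq]; simp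

lemma leftOpts_sum_ne_nil {G : SGame} (H : SGame) (hG : G.leftOpts ≠ []) :
    (G.sum H).leftOpts ≠ [] :=
  mt (fun h => (leftOpts_sum_eq_nil.1 h).1) hG

lemma rightOpts_sum_ne_nil {G : SGame} (H : SGame) (hG : G.rightOpts ≠ []) :
    (G.sum H).rightOpts ≠ [] :=
  mt (fun h => (rightOpts_sum_eq_nil.1 h).1) hG

lemma sum_right_mem_leftOpts_sum {G B : SGame} (H : SGame) (hB : B ∈ G.leftOpts) :
    B.sum H ∈ (G.sum H).leftOpts :=
  mem_leftOpts_sum.2 (.inl ⟨B, hB, rfl⟩)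

lemma sum_left_mem_leftOpts_sum (G : SGame) {H x : SGame} (hx : x ∈ H.leftOpts) :
    G.sum x ∈ (G.sum H).leftOpts :=
  mem_leftOpts_sum.2 (.inr ⟨x, hx, rfl⟩)

lemma sum_right_mem_rightOpts_sum {G D : SGame} (H : SGame) (hD : D ∈ G.rightOpts) :
    D.sum H ∈ (G.sum H).rightOpts :=
  mem_rightOpts_sum.2 (.inl ⟨D, hD, rfl⟩)

lemma sum_left_mem_rightOpts_sum (G : SGame) {H x : SGame} (hx : x ∈ H.rightOpts) :
    G.sum x ∈ (G.sum H).rightOpts :=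
  mem_rightOpts_sum.2 (.inr ⟨x, hx, rfl⟩)

lemma scores_sum_const (c : ℝ) (G : SGame) :
    (G.sum (mk [] [] c)).leftScore = G.leftScore + c ∧
      (G.sum (mk [] [] c)).rightScore = G.rightScore + c := by
  induction G using induction_opts with
  | ind G ihL ihR =>
  constructor
  · by_cases hG : G.leftOpts = []
    · rw [leftScore_of_leftOpts_eq_nil hG,
        leftScore_of_leftOpts_eq_nil (leftOpts_sum_eq_nil.2 ⟨hG, rfl⟩), score_sum, score_mk]
    obtain ⟨B, hB, hGB⟩ := exists_leftScore_eq hG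
    obtain ⟨g, hg, hg'⟩ := exists_leftScore_eq (G := G.sum (mk [] [] c))
      (leftOpts_sum_ne_nil _ hG)
    obtain ⟨B', hB', rfl⟩ : ∃ B' ∈ G.leftOpts, B'.sum (mk [] [] c) = g := by
      simpa using mem_leftOpts_sum.1 hg
    apply le_antisymm
    · rw [hg', (ihL B' hB').2]
      linarith [rightScore_le_leftScore hB']
    · have := rightScore_le_leftScore (sum_right_mem_leftOpts_sum (mk [] [] c) hB)
      rw [(ihL B hB).2] at this
      linarith
  · by_cases hG : G.rightOpts = []
    · rw [rightScore_of_rightOpts_eq_nil hG,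
        rightScore_of_rightOpts_eq_nil (rightOpts_sum_eq_nil.2 ⟨hG, rfl⟩), score_sum, score_mk]
    obtain ⟨D, hD, hGD⟩ := exists_rightScore_eq hG
    obtain ⟨d, hd, hd'⟩ := exists_rightScore_eq (G := G.sum (mk [] [] c))
      (rightOpts_sum_ne_nil _ hG)
    obtain ⟨D', hD', rfl⟩ : ∃ D' ∈ G.rightOpts, D'.sum (mk [] [] c) = d := by
      simpa using mem_rightOpts_sum.1 hd
    apply le_antisymm
    · have :=
        rightScore_le_leftScore_of_mem_rightOpts (sum_right_mem_rightOpts_sum (mk [] [] c) hD)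
      rw [(ihR D hD).1] at this
      linarith
    · rw [hd', (ihR D' hD').1]
      linarith [rightScore_le_leftScore_of_mem_rightOpts hD']

lemma leftOpts_ne_nil_of_le {G H : SGame} (h : Le H G) (hG : G.leftOpts ≠ []) :
    H.leftOpts ≠ [] := by
  intro hH
  obtain ⟨M, hM⟩ : BddAbove {x | x ∈ G.leftOpts.map leftScore} := (List.finite_toSet _).bddAbove
  let penalty : SGame := mk [] [] (-M - 1)
  let X : SGame := mk [] [penalty] (-H.score)
  have hHX : (H.sum X).leftScore = 0 := by
    rw [leftScore_of_leftOpts_eq_nil (leftOpts_sum_eq_nil.2 ⟨hH, rfl⟩), score_sum]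
    simp [X]
  -- Left must move in `G`, after which Right moves `X` to the penalty.
  have hGX : (G.sum X).leftScore < 0 := by
    obtain ⟨g, hg, hGg⟩ := exists_leftScore_eq (G := G.sum X) (leftOpts_sum_ne_nil _ hG)
    obtain ⟨B, hB, rfl⟩ : ∃ B ∈ G.leftOpts, B.sum X = g := by
      simpa [X] using mem_leftOpts_sum.1 hg
    calc (G.sum X).leftScore = (B.sum X).rightScore := hGg
      _ ≤ (B.sum penalty).leftScore :=
        rightScore_le_leftScore_of_mem_rightOpts (sum_left_mem_rightOpts_sum B (by simp [X]))
      _ = B.leftScore + (-M - 1) := (scores_sum_const _ B).1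
      _ < 0 := by linarith [hM (List.mem_map_of_mem hB)]
  exact lt_irrefl 0 (hHX ▸ (h X).2.2.1 hGX)

/-- `G ≤ H` as seen through a set `S` of scores; `Le` is `LeAt` for both `Ici 0` and `Ioi 0`. -/
def LeAt (S : Set ℝ) (G H : SGame) : Prop :=
  ∀ X : SGame, ((G.sum X).leftScore ∈ S → (H.sum X).leftScore ∈ S) ∧
    ((G.sum X).rightScore ∈ S → (H.sum X).rightScore ∈ S)

lemma Le.leAt_Ici {G H : SGame} (h : Le G H) : LeAt (Ici 0) G H := fun X =>
  ⟨fun hG => not_lt.1 fun hH => (h X).2.2.1 hH |>.not_ge hG,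
    fun hG => not_lt.1 fun hH => (h X).2.2.2 hH |>.not_ge hG⟩

lemma Le.leAt_Ioi {G H : SGame} (h : Le G H) : LeAt (Ioi 0) G H := fun X =>
  ⟨fun hG => not_le.1 fun hH => (h X).1 hH |>.not_gt hG,
    fun hG => not_le.1 fun hH => (h X).2.1 hH |>.not_gt hG⟩

lemma outcome_eq_of_iff {G H : SGame}
    (hl₀ : 0 ≤ G.leftScore ↔ 0 ≤ H.leftScore) (hl : 0 < G.leftScore ↔ 0 < H.leftScore)
    (hr₀ : 0 ≤ G.rightScore ↔ 0 ≤ H.rightScore) (hr : 0 < G.rightScore ↔ 0 < H.rightScore) :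
    G.outcome = H.outcome := by
  have eq_zero_iff (x : ℝ) : x = 0 ↔ ¬0 < x ∧ 0 ≤ x := by rw [le_antisymm_iff, not_lt]
  simp only [outcome, eq_zero_iff, hl₀, hl, hr₀, hr]

lemma gameEq_of_leAt {G H : SGame} (h₀ : LeAt (Ici 0) G H) (h₀' : LeAt (Ici 0) H G)
    (h : LeAt (Ioi 0) G H) (h' : LeAt (Ioi 0) H G) : gameEq G H := fun X =>
  outcome_eq_of_iff ⟨(h₀ X).1, (h₀' X).1⟩ ⟨(h X).1, (h' X).1⟩ ⟨(h₀ X).2, (h₀' X).2⟩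
    ⟨(h X).2, (h' X).2⟩

lemma leftScore_mem_of_mem_leftOpts {S : Set ℝ} (hS : IsUpperSet S) {G g : SGame}
    (hg : g ∈ G.leftOpts) (h : g.rightScore ∈ S) : G.leftScore ∈ S :=
  hS (rightScore_le_leftScore hg) h

lemma leftScore_mem_of_mem_rightOpts {S : Set ℝ} (hS : IsUpperSet S) {G d : SGame}
    (hd : d ∈ G.rightOpts) (h : G.rightScore ∈ S) : d.leftScore ∈ S :=
  hS (rightScore_le_leftScore_of_mem_rightOpts hd) h

/-- The hypothesis `h` may use the conclusion at the Left options of the context `X`. -/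
lemma leAt_mk_of_forall_leftOpts {S : Set ℝ} (hS : IsUpperSet S) {L L' R : List SGame} {s : ℝ}
    (hL : L ≠ [])
    (h : ∀ X, (∀ x ∈ X.leftOpts,
        ((mk L R s).sum x).rightScore ∈ S → ((mk L' R s).sum x).rightScore ∈ S) →
      ∀ B ∈ L, (B.sum X).rightScore ∈ S → ((mk L' R s).sum X).leftScore ∈ S) :
    LeAt S (mk L R s) (mk L' R s) := by
  intro X
  induction X using induction_opts with
  | ind X ihL ihR =>
  constructor
  · intro hX
    obtain ⟨g, hg, hXg⟩ := exists_leftScore_eq (G := (mk L R s).sum X)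
      (leftOpts_sum_ne_nil _ hL)
    rw [hXg] at hX
    rcases mem_leftOpts_sum.1 hg with ⟨B, hB, rfl⟩ | ⟨x, hx, rfl⟩
    · exact h X (fun x hx => (ihL x hx).2) B hB hX
    · exact leftScore_mem_of_mem_leftOpts hS (sum_left_mem_leftOpts_sum _ hx) ((ihL x hx).2 hX)
  · intro hX
    by_cases hRX : R = [] ∧ X.rightOpts = []
    · rw [rightScore_of_rightOpts_eq_nil (G := (mk L R s).sum X) (rightOpts_sum_eq_nil.2 hRX),
        score_sum] at hX
      rwa [rightScore_of_rightOpts_eq_nil (G := (mk L' R s).sum X) (rightOpts_sum_eq_nil.2 hRX),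
        score_sum]
    obtain ⟨d, hd, hXd⟩ := exists_rightScore_eq (G := (mk L' R s).sum X)
      (mt rightOpts_sum_eq_nil.1 hRX)
    rw [hXd]
    rcases mem_rightOpts_sum.1 hd with ⟨D, hD, rfl⟩ | ⟨x, hx, rfl⟩
    · exact leftScore_mem_of_mem_rightOpts hS
        (sum_right_mem_rightOpts_sum (G := mk L R s) X hD) hX
    · exact (ihR x hx).1 (leftScore_mem_of_mem_rightOpts hS (sum_left_mem_rightOpts_sum _ hx) hX)

lemma leAt_bypass {S : Set ℝ} (hS : IsUpperSet S) {A Ar : SGame} (hAr : Ar ∈ A.rightOpts)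
    (hArL : Ar.leftOpts ≠ []) {Lrest R : List SGame} {s : ℝ}
    (h : LeAt S Ar (mk (A :: Lrest) R s)) :
    LeAt S (mk (A :: Lrest) R s) (mk (Ar.leftOpts ++ Lrest) R s) := by
  refine leAt_mk_of_forall_leftOpts hS (List.cons_ne_nil _ _) fun X ih B hB hBX => ?_
  rcases List.mem_cons.1 hB with rfl | hB
  · -- Right answers `B + X` by moving to `Ar + X`, where Left has a good reply.
    have hArX := leftScore_mem_of_mem_rightOpts hS (sum_right_mem_rightOpts_sum X hAr) hBX
    obtain ⟨w, hw, hArw⟩ := exists_leftScore_eq (G := Ar.sum X)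
      (leftOpts_sum_ne_nil _ hArL)
    rw [hArw] at hArX
    rcases mem_leftOpts_sum.1 hw with ⟨W, hW, rfl⟩ | ⟨x, hx, rfl⟩
    · exact leftScore_mem_of_mem_leftOpts hS
        (sum_right_mem_leftOpts_sum X (List.mem_append_left _ hW)) hArX
    · exact leftScore_mem_of_mem_leftOpts hS (sum_left_mem_leftOpts_sum _ hx)
        (ih x hx ((h x).2 hArX))
  · exact leftScore_mem_of_mem_leftOpts hS
      (sum_right_mem_leftOpts_sum X (List.mem_append_right _ hB)) hBX

lemma bypass_leAt {S : Set ℝ} (hS : IsUpperSet S) {A Ar : SGame} (hArL : Ar.leftOpts ≠ [])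
    {Lrest R : List SGame} {s : ℝ} (h : LeAt S Ar (mk (A :: Lrest) R s)) :
    LeAt S (mk (Ar.leftOpts ++ Lrest) R s) (mk (A :: Lrest) R s) := by
  refine leAt_mk_of_forall_leftOpts hS (by simp [hArL]) fun X _ B hB hBX => ?_
  rcases List.mem_append.1 hB with hB | hB
  · exact (h X).1 (leftScore_mem_of_mem_leftOpts hS (sum_right_mem_leftOpts_sum X hB) hBX)
  · exact leftScore_mem_of_mem_leftOpts hS
      (sum_right_mem_leftOpts_sum X (List.mem_cons_of_mem A hB)) hBX

end SGame

/-- Bypassing a reversible Left option preserves equality: if `A` is a Left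
option of `G` with a Right option `Ar ≤ G`, then replacing `A` by the Left
options of `Ar` gives an equal game. -/
theorem bypass_reversible_left (A Ar : SGame) (hAr : Ar ∈ A.rightOpts)
    (Lrest R : List SGame) (s : ℝ)
    (h : SGame.Le Ar (SGame.mk (A :: Lrest) R s)) :
    SGame.gameEq (SGame.mk (A :: Lrest) R s)
      (SGame.mk (Ar.leftOpts ++ Lrest) R s) := by
  have hArL : Ar.leftOpts ≠ [] := SGame.leftOpts_ne_nil_of_le h (List.cons_ne_nil _ _)
  exact SGame.gameEq_of_leAt
    (SGame.leAt_bypass (isUpperSet_Ici 0) hAr hArL h.leAt_Ici)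
    (SGame.bypass_leAt (isUpperSet_Ici 0) hArL h.leAt_Ici)
    (SGame.leAt_bypass (isUpperSet_Ioi 0) hAr hArL h.leAt_Ioi)
    (SGame.bypass_leAt (isUpperSet_Ioi 0) hArL h.leAt_Ioi)
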